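/- Let Δ be a probabilistic one-counter automaton with control states Q, |Q| = k. For all control states p, q and all m, n ∈ ℕ: if pXᵐZ ∼ qXⁿZ in S(Δ), then dist(pXᵐZ) = dist(qXⁿZ). -/

import Mathlib

open scoped ENNReal

noncomputable section

/-- A probabilistic labelled transition system (pLTS): states `S`, alphabet `A`,
and a transition relation into probability distributions (`PMF`s) on `S`. -/
structure PLTS (S : Type) (A : Type) where
  Tr : S → A → PMF S → Prop

namespace PLTS

variable {S A : Type}

/-- The mass that a distribution assigns to a set of states. -/
def mass (d : PMF S) (E : Set S) : ℝ≥0∞ := ∑' s : E, d s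

/-- Two distributions are `r`-equivalent if they assign equal mass to every
`r`-equivalence class (for an equivalence `r`, the classes are the sets `{t | r s t}`). -/
def REquiv (r : S → S → Prop) (d d' : PMF S) : Prop :=
  ∀ s : S, mass d {t | r s t} = mass d' {t | r s t}

/-- An equivalence relation is a bisimulation if related states can match
each other's transitions with `r`-equivalent target distributions. -/
def IsBisimulation (L : PLTS S A) (r : S → S → Prop) : Prop :=
  Equivalence r ∧
    ∀ s t, r s t → ∀ a d, L.Tr s a d → ∃ d', L.Tr t a d' ∧ REquiv r d d'

/-- Bisimilarity: the union of all bisimulation relations. -/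
def Bisim (L : PLTS S A) (s t : S) : Prop :=
  ∃ r, L.IsBisimulation r ∧ r s t

/-- The bisimulation approximants `∼ₙ`. -/
def approx (L : PLTS S A) : ℕ → S → S → Prop
  | 0 => fun _ _ => True
  | n + 1 => fun s t =>
      (∀ a d, L.Tr s a d → ∃ d', L.Tr t a d' ∧ REquiv (L.approx n) d d') ∧
      (∀ a d', L.Tr t a d' → ∃ d, L.Tr s a d ∧ REquiv (L.approx n) d d')

/-- A pLTS is finitely branching if every state has finitely many transitions. -/
def FinBranching (L : PLTS S A) : Prop :=
  ∀ s, {p : A × PMF S | L.Tr s p.1 p.2}.Finite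

/-- One-step successor relation: `s → s'` iff some transition of `s` gives `s'`
positive probability. -/
def Step (L : PLTS S A) (s s' : S) : Prop :=
  ∃ a d, L.Tr s a d ∧ d s' ≠ 0

end PLTS

/-- The rules of a probabilistic pushdown automaton (pPDA) with control states
`Q`, stack alphabet `Γ`, input alphabet `A`: a rule `qX –a↪ d` is a tuple
`(q, X, a, d)` where `d` is a distribution over pairs of a control state and
a string of length at most two that replaces the top symbol. -/
def PPDARules (Q Γ A : Type) := Q → Γ → A → PMF (Q × List Γ) → Prop

/-- Well-formedness of pPDA rules: target distributions are supported on
configurations `(p, α)` with `|α| ≤ 2` (i.e. `α ∈ Γ^{≤2}`). -/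
def PPDAWf {Q Γ A : Type} (Δ : PPDARules Q Γ A) : Prop :=
  ∀ q X a d, Δ q X a d → ∀ p (α : List Γ), d (p, α) ≠ 0 → α.length ≤ 2

/-- A nondeterministic PDA is a pPDA all of whose rules use Dirac distributions. -/
def IsPDA {Q Γ A : Type} (Δ : PPDARules Q Γ A) : Prop :=
  ∀ q X a d, Δ q X a d → ∃ c, d = PMF.pure c

/-- The pLTS induced by a pPDA on configurations `Q × Γ*`: a rule `qX –a↪ d`
and a tail `β ∈ Γ*` induce the transition `qXβ –a→ d'` with `d'(pαβ) = d(pα)`;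
configurations with empty stack have no transitions. -/
def PPDARules.plts {Q Γ A : Type} (Δ : PPDARules Q Γ A) : PLTS (Q × List Γ) A where
  Tr := fun c a d' => ∃ (q : Q) (X : Γ) (β : List Γ) (d : PMF (Q × List Γ)),
    c = (q, X :: β) ∧ Δ q X a d ∧ d' = d.map (fun pα => (pα.1, pα.2 ++ β))

/-- The stack alphabet `{X, Z}` of a one-counter automaton. -/
inductive OCSym : Type
  | X : OCSym
  | Z : OCSym
deriving DecidableEq

/-- Well-formedness of pOCA rules: `Z` always and only occurs at the bottom of
the stack, i.e. rules for top `X` rewrite `X` into `ε`, `X` or `XX`, and rules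
for top `Z` rewrite `Z` into `Z` or `XZ`. -/
def POCAWf {Q A : Type} (Δ : PPDARules Q OCSym A) : Prop :=
  (∀ q a d, Δ q OCSym.X a d → ∀ p (α : List OCSym), d (p, α) ≠ 0 →
      α = [] ∨ α = [OCSym.X] ∨ α = [OCSym.X, OCSym.X]) ∧
  (∀ q a d, Δ q OCSym.Z a d → ∀ p (α : List OCSym), d (p, α) ≠ 0 →
      α = [OCSym.Z] ∨ α = [OCSym.X, OCSym.Z])

/-- The configuration `pXᵐZ` of a pOCA. -/
def oconf {Q : Type} (p : Q) (m : ℕ) : Q × List OCSym :=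
  (p, List.replicate m OCSym.X ++ [OCSym.Z])

/-- The finite pLTS `ℱ_Δ` underlying a pOCA: `p –a→ d'` iff there is a rule
`pX –a↪ d` with `d'(q) = d(q,ε) + d(q,X) + d(q,XX)` for all `q`. -/
def underlying {Q A : Type} (Δ : PPDARules Q OCSym A) : PLTS Q A where
  Tr := fun p a d' => ∃ d, Δ p OCSym.X a d ∧
    ∀ q : Q, d' q = d (q, []) + d (q, [OCSym.X]) + d (q, [OCSym.X, OCSym.X])

/-- The disjoint-union pLTS of two pLTSs over the same alphabet. -/
def PLTS.sum {S₁ S₂ A : Type} (L₁ : PLTS S₁ A) (L₂ : PLTS S₂ A) :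
    PLTS (S₁ ⊕ S₂) A where
  Tr := fun s a d =>
    (∃ s₁ d₁, s = Sum.inl s₁ ∧ L₁.Tr s₁ a d₁ ∧ d = d₁.map Sum.inl) ∨
    (∃ s₂ d₂, s = Sum.inr s₂ ∧ L₂.Tr s₂ a d₂ ∧ d = d₂.map Sum.inr)

/-- `INC`: configurations `pXᵐZ` that are not related by the `k`-th
approximant (`k = |Q|`) to any state `q` of the underlying finite pLTS, in the
disjoint union of `S(Δ)` and `ℱ_Δ`. -/
def InINC {Q A : Type} [Fintype Q] (Δ : PPDARules Q OCSym A)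
    (p : Q) (m : ℕ) : Prop :=
  ∀ q : Q, ¬ (Δ.plts.sum (underlying Δ)).approx (Fintype.card Q)
      (Sum.inl (oconf p m)) (Sum.inr q)

/-- `ℓ` one-step successor moves lead from `s` to `t`. -/
def PLTS.StepN {S A : Type} (L : PLTS S A) : ℕ → S → S → Prop
  | 0, s, t => s = t
  | n + 1, s, t => ∃ u, L.Step s u ∧ L.StepN n u t

/-- `dist(c)`: the least number of one-step successor moves in `S(Δ)` leading
from the configuration `c` to some configuration in `INC` (and `∞ = ⊤` if
`INC` is unreachable). -/
def distINC {Q A : Type} [Fintype Q] (Δ : PPDARules Q OCSym A)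
    (c : Q × List OCSym) : ℕ∞ :=
  sInf {n : ℕ∞ | ∃ ℓ : ℕ, n = (ℓ : ℕ∞) ∧
    ∃ (p : Q) (m : ℕ), Δ.plts.StepN ℓ c (oconf p m) ∧ InINC Δ p m}

/-!
Bisimilarity refines every approximant `∼ₙ`, also after embedding `S(Δ)` into its disjoint
union with `ℱ_Δ`, so `INC` is closed under `∼`. A path of `ℓ` successor moves from `pXᵐZ`
to `INC` is matched step by step from a bisimilar `qXⁿZ` by a path of the same length through
bisimilar configurations, which are again of the form `p'Xᵐ'Z` and whose endpoint therefore lies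
in `INC`. Hence `dist(qXⁿZ) ≤ dist(pXᵐZ)`, and symmetrically.
-/

namespace PLTS

variable {S T A : Type}

lemma mass_eq_toOuterMeasure (d : PMF S) (E : Set S) : mass d E = d.toOuterMeasure E := by
  rw [PMF.toOuterMeasure_apply, mass, tsum_subtype]

lemma mass_map (f : S → T) (d : PMF S) (E : Set T) :
    mass (d.map f) E = mass d (f ⁻¹' E) := by
  rw [mass_eq_toOuterMeasure, mass_eq_toOuterMeasure, PMF.toOuterMeasure_map_apply]

lemma mass_ne_zero_iff {d : PMF S} {E : Set S} : mass d E ≠ 0 ↔ ∃ s ∈ E, d s ≠ 0 := by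
  rw [mass_eq_toOuterMeasure, Ne, PMF.toOuterMeasure_apply_eq_zero_iff,
    Set.not_disjoint_iff]
  exact exists_congr fun s => by rw [PMF.mem_support_iff, and_comm]

namespace REquiv

variable {r : S → S → Prop} {d d' d'' : PMF S}

protected lemma refl (r : S → S → Prop) (d : PMF S) : REquiv r d d := fun _ => rfl

protected lemma symm (h : REquiv r d d') : REquiv r d' d := fun s => (h s).symm

protected lemma trans (h : REquiv r d d') (h' : REquiv r d' d'') : REquiv r d d'' :=
  fun s => (h s).trans (h' s)

/-- An `r`-saturated set is the preimage of its image in the quotient by `r`, on which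
`r`-equivalent distributions push forward to the same distribution. -/
lemma mass_eq_of_saturated (hr : Equivalence r) (h : REquiv r d d') {E : Set S}
    (hE : ∀ u v, u ∈ E → r u v → v ∈ E) : mass d E = mass d' E := by
  let σ : Setoid S := ⟨r, hr⟩
  have hclass : ∀ s, Quotient.mk σ ⁻¹' {Quotient.mk σ s} = {t | r s t} := fun s =>
    Set.ext fun t => (Quotient.eq (r := σ)).trans ⟨hr.symm, hr.symm⟩
  have hmap : d.map (Quotient.mk σ) = d'.map (Quotient.mk σ) := by
    ext b
    induction b using Quotient.inductionOn with
    | h s =>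
      rw [← PMF.toOuterMeasure_apply_singleton, ← PMF.toOuterMeasure_apply_singleton,
        ← mass_eq_toOuterMeasure, ← mass_eq_toOuterMeasure, mass_map, mass_map, hclass, h s]
  have hsat : Quotient.mk σ ⁻¹' (Quotient.mk σ '' E) = E := by
    refine Set.Subset.antisymm ?_ (Set.subset_preimage_image _ E)
    rintro x ⟨e, he, hex⟩
    exact hE e x he (Quotient.exact hex)
  rw [← hsat, ← mass_map, ← mass_map, hmap]

lemma map_inl (h : REquiv r d d') :
    REquiv (Sum.LiftRel r (@Eq T)) (d.map Sum.inl) (d'.map Sum.inl) := by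
  rintro (w | z)
  · have hclass : Sum.inl ⁻¹' {y | Sum.LiftRel r (@Eq T) (Sum.inl w) y} = {v | r w v} := by
      ext v; simp
    rw [mass_map, mass_map, hclass, h w]
  · have hclass : Sum.inl ⁻¹' {y | Sum.LiftRel r (@Eq T) (Sum.inr z) y} = (∅ : Set S) := by
      ext v; simp
    rw [mass_map, mass_map, hclass]
    simp [mass]

end REquiv

lemma approx_trans (L : PLTS S A) :
    ∀ n {s t u}, L.approx n s t → L.approx n t u → L.approx n s u
  | 0, _, _, _, _, _ => trivial
  | _ + 1, _, _, _, ⟨h₁, h₂⟩, ⟨g₁, g₂⟩ =>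
    ⟨fun a d hd =>
      let ⟨d', hd', he⟩ := h₁ a d hd
      let ⟨d'', hd'', he'⟩ := g₁ a d' hd'
      ⟨d'', hd'', he.trans he'⟩,
    fun a d hd =>
      let ⟨d', hd', he⟩ := g₂ a d hd
      let ⟨d'', hd'', he'⟩ := h₂ a d' hd'
      ⟨d'', hd'', he'.trans he⟩⟩

lemma IsBisimulation.le_approx {L : PLTS S A} {r : S → S → Prop}
    (hb : L.IsBisimulation r) : ∀ n {s t}, r s t → L.approx n s t
  | 0, _, _, _ => trivial
  | n + 1, s, t, hst => by
    have hequiv : ∀ {d d'}, REquiv r d d' → REquiv (L.approx n) d d' := fun he s₀ =>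
      he.mass_eq_of_saturated hb.1 fun u v hu huv => L.approx_trans n hu (hb.le_approx n huv)
    refine ⟨fun a d hd => ?_, fun a d' hd' => ?_⟩
    · obtain ⟨d', hd', he⟩ := hb.2 s t hst a d hd
      exact ⟨d', hd', hequiv he⟩
    · obtain ⟨d, hd, he⟩ := hb.2 t s (hb.1.symm hst) a d' hd'
      exact ⟨d, hd, (hequiv he).symm⟩

lemma IsBisimulation.sum_inl {L₁ : PLTS S A} {L₂ : PLTS T A} {r : S → S → Prop}
    (hr : L₁.IsBisimulation r) : (L₁.sum L₂).IsBisimulation (Sum.LiftRel r Eq) := by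
  refine ⟨⟨?refl, ?symm, ?trans⟩, ?transfer⟩
  case refl => rintro (s | t) <;> simp [hr.1.refl]
  case symm => rintro _ _ (⟨h⟩ | ⟨rfl⟩) <;> simp [hr.1.symm, *]
  case trans =>
    rintro _ _ _ (⟨h⟩ | ⟨rfl⟩) (⟨h'⟩ | ⟨rfl⟩)
    exacts [.inl (hr.1.trans h h'), .inr rfl]
  case transfer =>
    rintro _ _ (⟨huv⟩ | ⟨rfl⟩) a d hd
    · obtain ⟨s₁, d₁, hs₁, hTr, rfl⟩ | ⟨_, _, hs₂, _, _⟩ := hd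
      · cases hs₁
        obtain ⟨d₁', hTr', he⟩ := hr.2 _ _ huv a d₁ hTr
        exact ⟨d₁'.map Sum.inl, .inl ⟨_, d₁', rfl, hTr', rfl⟩, he.map_inl⟩
      · cases hs₂
    · exact ⟨d, hd, REquiv.refl _ _⟩

namespace Bisim

variable {L : PLTS S A} {s t u : S}

lemma approx (h : L.Bisim s t) (n : ℕ) : L.approx n s t :=
  let ⟨_, hr, hst⟩ := h
  hr.le_approx n hst

lemma symm (h : L.Bisim s t) : L.Bisim t s :=
  let ⟨r, hr, hst⟩ := h
  ⟨r, hr, hr.1.symm hst⟩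

lemma sum_inl {L₂ : PLTS T A} (h : L.Bisim s t) :
    (L.sum L₂).Bisim (Sum.inl s) (Sum.inl t) :=
  let ⟨_, hr, hst⟩ := h
  ⟨_, hr.sum_inl, .inl hst⟩

lemma exists_step (h : L.Bisim s t) (hs : L.Step s u) : ∃ u', L.Step t u' ∧ L.Bisim u u' := by
  obtain ⟨r, hr, hst⟩ := h
  obtain ⟨a, d, hd, hu⟩ := hs
  obtain ⟨d', hd', he⟩ := hr.2 s t hst a d hd
  have hpos : mass d' {v | r u v} ≠ 0 :=
    he u ▸ mass_ne_zero_iff.2 ⟨u, hr.1.refl u, hu⟩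
  obtain ⟨u', huu', hu'⟩ := mass_ne_zero_iff.1 hpos
  exact ⟨u', ⟨a, d', hd', hu'⟩, r, hr, huu'⟩

lemma exists_stepN (h : L.Bisim s t) :
    ∀ {ℓ}, L.StepN ℓ s u → ∃ u', L.StepN ℓ t u' ∧ L.Bisim u u' := by
  intro ℓ
  induction ℓ generalizing s t with
  | zero => rintro rfl; exact ⟨t, rfl, h⟩
  | succ ℓ ih =>
    rintro ⟨v, hv, hvu⟩
    obtain ⟨v', hv', hbv⟩ := h.exists_step hv
    obtain ⟨u', hu', hbu⟩ := ih hbv hvu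
    exact ⟨u', ⟨v', hv', hu'⟩, hbu⟩

end Bisim

lemma StepN.of_step_closed {L : PLTS S A} {P : S → Prop} (hP : ∀ s u, P s → L.Step s u → P u) :
    ∀ {ℓ s t}, L.StepN ℓ s t → P s → P t
  | 0, _, _, rfl, hs => hs
  | _ + 1, _, _, ⟨_, hsv, hvt⟩, hs => StepN.of_step_closed hP hvt (hP _ _ hs hsv)

end PLTS

variable {Q A : Type}

lemma PPDARules.exists_of_plts_step {Γ : Type} {Δ : PPDARules Q Γ A} {c u : Q × List Γ}
    (h : Δ.plts.Step c u) :
    ∃ X β a d p α, c = (c.1, X :: β) ∧ Δ c.1 X a d ∧ d (p, α) ≠ 0 ∧ u = (p, α ++ β) := by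
  obtain ⟨a, _, ⟨q, X, β, d, rfl, hΔ, rfl⟩, hu⟩ := h
  obtain ⟨⟨p, α⟩, hpα, rfl⟩ := (PMF.mem_support_map_iff _ _ _).1 hu
  exact ⟨X, β, a, d, p, α, rfl, hΔ, hpα, rfl⟩

lemma POCAWf.step_oconf {Δ : PPDARules Q OCSym A} (hwf : POCAWf Δ) {p : Q} {m : ℕ}
    {u : Q × List OCSym} (h : Δ.plts.Step (oconf p m) u) : ∃ p' m', u = oconf p' m' := by
  obtain ⟨Y, β, a, d, p', α, hc, hΔ, hα, rfl⟩ := PPDARules.exists_of_plts_step h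
  cases m with
  | zero =>
    obtain ⟨rfl, rfl⟩ : OCSym.Z = Y ∧ [] = β := by simpa [oconf] using hc
    rcases hwf.2 p a d hΔ p' α hα with rfl | rfl
    exacts [⟨p', 0, rfl⟩, ⟨p', 1, rfl⟩]
  | succ m =>
    obtain ⟨rfl, rfl⟩ : OCSym.X = Y ∧ List.replicate m OCSym.X ++ [OCSym.Z] = β := by
      simpa [oconf, List.replicate_succ] using hc
    rcases hwf.1 p a d hΔ p' α hα with rfl | rfl | rfl
    exacts [⟨p', m, rfl⟩, ⟨p', m + 1, rfl⟩, ⟨p', m + 2, rfl⟩]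

lemma POCAWf.stepN_oconf {Δ : PPDARules Q OCSym A} (hwf : POCAWf Δ) {ℓ : ℕ} {p : Q} {m : ℕ}
    {u : Q × List OCSym} (h : Δ.plts.StepN ℓ (oconf p m) u) : ∃ p' m', u = oconf p' m' :=
  h.of_step_closed (P := fun c => ∃ p' m', c = oconf p' m')
    (fun _ _ ⟨_, _, hc⟩ hstep => hwf.step_oconf (hc ▸ hstep)) ⟨p, m, rfl⟩

variable [Fintype Q] {Δ : PPDARules Q OCSym A}

lemma InINC.of_bisim {p p' : Q} {m m' : ℕ} (h : Δ.plts.Bisim (oconf p m) (oconf p' m'))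
    (hi : InINC Δ p m) : InINC Δ p' m' := fun q hq =>
  hi q ((Δ.plts.sum (underlying Δ)).approx_trans _ (h.sum_inl.approx _) hq)

lemma distINC_le_of_bisim (hwf : POCAWf Δ) {p q : Q} {m n : ℕ}
    (h : Δ.plts.Bisim (oconf p m) (oconf q n)) :
    distINC Δ (oconf q n) ≤ distINC Δ (oconf p m) := by
  apply sInf_le_sInf
  rintro _ ⟨ℓ, rfl, p', m', hstep, hinc⟩
  obtain ⟨_, hstep', hb⟩ := h.exists_stepN hstep
  obtain ⟨p'', m'', rfl⟩ := hwf.stepN_oconf hstep'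
  exact ⟨ℓ, rfl, p'', m'', hstep', hinc.of_bisim hb⟩

theorem bisim_distINC_eq_general (Q A : Type) [Fintype Q]
    (Δ : PPDARules Q OCSym A) (hwf : POCAWf Δ) (p q : Q) (m n : ℕ)
    (h : Δ.plts.Bisim (oconf p m) (oconf q n)) :
    distINC Δ (oconf p m) = distINC Δ (oconf q n) :=
  le_antisymm (distINC_le_of_bisim hwf h.symm) (distINC_le_of_bisim hwf h)

/-- For a pOCA `Δ`: bisimilar configurations have the same
distance to `INC`: if `pXᵐZ ∼ qXⁿZ` in `S(Δ)` then
`dist(pXᵐZ) = dist(qXⁿZ)`. -/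
theorem bisim_distINC_eq (Q A : Type) [Fintype Q] [Fintype A]
    (Δ : PPDARules Q OCSym A) (hwf : POCAWf Δ) (p q : Q) (m n : ℕ)
    (h : Δ.plts.Bisim (oconf p m) (oconf q n)) :
    distINC Δ (oconf p m) = distINC Δ (oconf q n) :=
  bisim_distINC_eq_general Q A Δ hwf p q m n h
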